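/- (Halting II.) Let Φ be an m×d real matrix with restricted isometry constant δ_{2s} ≤ 0.1. Let x, a ∈ ℝ^d be s-sparse vectors, let e ∈ ℝ^m, set r = x − a, v = Φr + e, and y = Φ*v. Then: (i) if ‖x − a‖₂ ≤ 0.95 (ε − ‖e‖₂) then ‖v‖₂ ≤ ε; (ii) if ‖x − a‖_∞ ≤ 0.45 η/s − 0.68 ‖e‖₂/√s then ‖y‖_∞ ≤ η/√(2s). -/

import Mathlib

/-- The Euclidean (ℓ2) norm of a finitely-indexed real vector. -/
noncomputable def l2 {ι : Type*} [Fintype ι] (v : ι → ℝ) : ℝ :=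
  Real.sqrt (∑ i, (v i) ^ 2)

/-- The supremum (ℓ∞) norm of a finitely-indexed real vector. -/
noncomputable def linf {ι : Type*} [Fintype ι] (v : ι → ℝ) : ℝ :=
  ⨆ i, |v i|

/-- A vector is `s`-sparse if it has at most `s` nonzero coordinates. -/
def Sparse {d : ℕ} (s : ℕ) (v : Fin d → ℝ) : Prop :=
  {i | v i ≠ 0}.ncard ≤ s

/-- `δ` satisfies the restricted isometry inequalities of `Φ` at sparsity level `r`
(quadratic form); `δ_r ≤ δ` is equivalent to this (for `δ ≥ 0`). -/
def RICq {m d : ℕ} (Φ : Matrix (Fin m) (Fin d) ℝ) (r : ℕ) (δ : ℝ) : Prop :=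
  ∀ v : Fin d → ℝ, Sparse r v →
    (1 - δ) * (l2 v) ^ 2 ≤ (l2 (Φ.mulVec v)) ^ 2 ∧
      (l2 (Φ.mulVec v)) ^ 2 ≤ (1 + δ) * (l2 v) ^ 2

/-!
Part (i) is the RIP upper bound `‖Φ r‖₂ ≤ √1.1 ‖r‖₂` plus the triangle inequality.

For part (ii), let `g` be the `i`-th standard basis vector, so that coordinate `i` of `Φ* v` is
`⟨Φ g, Φ r + e⟩`. Writing `r = r_i g + r₁ + r₂` with `r₁` supported in `supp x \ {i}` and `r₂` in
`supp a \ {i}`, each of `g + r₁`, `g + r₂` is `(s+1)`-sparse, so polarizing the RIP inequalities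
bounds `⟨Φ g, Φ r_k⟩` by `δ ‖r‖₂`, while `⟨Φ g, Φ g⟩ ≤ 1 + δ` and `|⟨Φ g, e⟩| ≤ √(1+δ) ‖e‖₂`.
Finally `‖r‖₂ ≤ √(2s) ‖r‖_∞` since `r` is `2s`-sparse, and the stated threshold absorbs the
constants.
-/

open Matrix Function

section L2

variable {ι : Type*} [Fintype ι]

lemma l2_eq_norm (v : ι → ℝ) : l2 v = ‖(WithLp.toLp 2 v : EuclideanSpace ℝ ι)‖ := by
  simp [l2, EuclideanSpace.norm_eq]

lemma l2_nonneg (v : ι → ℝ) : 0 ≤ l2 v := Real.sqrt_nonneg _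

lemma l2_sq (v : ι → ℝ) : l2 v ^ 2 = v ⬝ᵥ v := by
  rw [l2, Real.sq_sqrt (by positivity)]
  simp [dotProduct, sq]

lemma l2_eq_zero {v : ι → ℝ} : l2 v = 0 ↔ v = 0 := by
  rw [l2_eq_norm, norm_eq_zero, WithLp.toLp_eq_zero]

lemma l2_add_le (u v : ι → ℝ) : l2 (u + v) ≤ l2 u + l2 v := by
  simpa only [l2_eq_norm, WithLp.toLp_add] using norm_add_le _ _

lemma l2_smul (c : ℝ) (v : ι → ℝ) : l2 (c • v) = |c| * l2 v := by
  simp only [l2_eq_norm, WithLp.toLp_smul, norm_smul, Real.norm_eq_abs]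

lemma l2_single_one [DecidableEq ι] (i : ι) : l2 (Pi.single i (1 : ℝ)) = 1 := by
  simp [l2, Pi.single_apply]

lemma abs_dotProduct_le_l2_mul_l2 (u v : ι → ℝ) : |u ⬝ᵥ v| ≤ l2 u * l2 v := by
  have h := abs_real_inner_le_norm (WithLp.toLp 2 u : EuclideanSpace ℝ ι) (WithLp.toLp 2 v)
  rwa [EuclideanSpace.inner_eq_star_dotProduct, star_trivial, dotProduct_comm, ← l2_eq_norm,
    ← l2_eq_norm] at h

lemma l2_le_l2_of_abs_le {u v : ι → ℝ} (h : ∀ i, |u i| ≤ |v i|) : l2 u ≤ l2 v :=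
  Real.sqrt_le_sqrt <| Finset.sum_le_sum fun i _ => sq_le_sq.mpr (h i)

end L2

section Linf

variable {ι : Type*} [Fintype ι]

lemma abs_le_linf (v : ι → ℝ) (i : ι) : |v i| ≤ linf v :=
  le_ciSup (f := fun i => |v i|) (Set.finite_range _).bddAbove i

lemma linf_nonneg (v : ι → ℝ) : 0 ≤ linf v := Real.iSup_nonneg fun _ => abs_nonneg _

lemma linf_le {v : ι → ℝ} {B : ℝ} (h : ∀ i, |v i| ≤ B) (hB : 0 ≤ B) : linf v ≤ B :=
  Real.iSup_le h hB

end Linf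

namespace Sparse

variable {d n k : ℕ}

lemma of_support_subset {v : Fin d → ℝ} {S : Set (Fin d)} (hv : support v ⊆ S)
    (hS : S.ncard ≤ n) : Sparse n v :=
  (Set.ncard_le_ncard hv (Set.toFinite S)).trans hS

lemma sub {x a : Fin d → ℝ} (hx : Sparse n x) (ha : Sparse k a) : Sparse (n + k) (x - a) :=
  of_support_subset (support_sub x a) ((Set.ncard_union_le _ _).trans (add_le_add hx ha))

lemma single (hn : 1 ≤ n) (i : Fin d) (b : ℝ) : Sparse n (Pi.single i b) :=
  of_support_subset Pi.support_single_subset (by rwa [Set.ncard_singleton])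

lemma l2_le_sqrt_mul_linf {v : Fin d → ℝ} (hv : Sparse n v) : l2 v ≤ √n * linf v := by
  classical
  rw [l2, ← Real.sqrt_sq (linf_nonneg v), ← Real.sqrt_mul (Nat.cast_nonneg n)]
  refine Real.sqrt_le_sqrt ?_
  have hcard : (Finset.univ.filter fun i => v i ≠ 0).card ≤ n := by
    simpa [Sparse, Set.ncard_eq_toFinset_card'] using hv
  calc ∑ i, v i ^ 2 = ∑ i with v i ≠ 0, v i ^ 2 :=
        (Finset.sum_filter_of_ne fun i _ h => by simpa using h).symm
    _ ≤ (Finset.univ.filter fun i => v i ≠ 0).card • linf v ^ 2 :=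
        Finset.sum_le_card_nsmul _ _ _ fun i _ =>
          sq_le_sq.mpr ((abs_le_linf v i).trans_eq (abs_of_nonneg (linf_nonneg v)).symm)
    _ ≤ n * linf v ^ 2 := by
        rw [nsmul_eq_mul]
        exact mul_le_mul_of_nonneg_right (by exact_mod_cast hcard) (sq_nonneg _)

end Sparse

namespace RICq

variable {m d N : ℕ} {Φ : Matrix (Fin m) (Fin d) ℝ} {δ : ℝ}

lemma l2_mulVec_le (hΦ : RICq Φ N δ) {v : Fin d → ℝ} (hv : Sparse N v) :
    l2 (Φ *ᵥ v) ≤ √(1 + δ) * l2 v := by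
  rw [← Real.sqrt_sq (l2_nonneg (Φ *ᵥ v)), ← Real.sqrt_sq (l2_nonneg v),
    ← Real.sqrt_mul' _ (sq_nonneg _)]
  exact Real.sqrt_le_sqrt (hΦ v hv).2

lemma abs_dotProduct_mulVec_sub_le_half (hΦ : RICq Φ N δ) {u v : Fin d → ℝ} {S : Set (Fin d)}
    (hu : support u ⊆ S) (hv : support v ⊆ S) (hS : S.ncard ≤ N) :
    |Φ *ᵥ u ⬝ᵥ Φ *ᵥ v - u ⬝ᵥ v| ≤ δ / 2 * (l2 u ^ 2 + l2 v ^ 2) := by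
  have huv := Set.union_subset hu hv
  have hadd := hΦ (u + v) (.of_support_subset ((support_add u v).trans huv) hS)
  have hsub := hΦ (u - v) (.of_support_subset ((support_sub u v).trans huv) hS)
  simp only [l2_sq, mulVec_add, mulVec_sub, add_dotProduct, dotProduct_add, sub_dotProduct,
    dotProduct_sub, dotProduct_comm v u, dotProduct_comm (Φ *ᵥ v)] at hadd hsub ⊢
  rw [abs_le]
  constructor <;> linarith

lemma abs_dotProduct_mulVec_sub_le (hΦ : RICq Φ N δ) {u v : Fin d → ℝ} {S : Set (Fin d)}
    (hu : support u ⊆ S) (hv : support v ⊆ S) (hS : S.ncard ≤ N) :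
    |Φ *ᵥ u ⬝ᵥ Φ *ᵥ v - u ⬝ᵥ v| ≤ δ * l2 u * l2 v := by
  rcases (l2_nonneg u).eq_or_lt with hu0 | hα
  · rw [← hu0]
    simp [l2_eq_zero.mp hu0.symm]
  rcases (l2_nonneg v).eq_or_lt with hv0 | hβ
  · rw [← hv0]
    simp [l2_eq_zero.mp hv0.symm]
  have key := hΦ.abs_dotProduct_mulVec_sub_le_half (u := (l2 u)⁻¹ • u) (v := (l2 v)⁻¹ • v)
    ((support_const_smul_subset _ u).trans hu) ((support_const_smul_subset _ v).trans hv) hS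
  simp only [l2_smul, mulVec_smul, smul_dotProduct, dotProduct_smul, smul_eq_mul, ← mul_sub,
    abs_mul, abs_inv, abs_of_pos hα, abs_of_pos hβ, inv_mul_cancel₀ hα.ne',
    inv_mul_cancel₀ hβ.ne'] at key
  rw [← mul_assoc, ← mul_inv, inv_mul_le_iff₀ (mul_pos hβ hα)] at key
  exact key.trans_eq (by ring)

lemma l2_mulVec_add_le (hΦ : RICq Φ N δ) {r : Fin d → ℝ} (hr : Sparse N r) (e : Fin m → ℝ)
    {c ε : ℝ} (hc : 0 < c) (hcδ : √(1 + δ) * c ≤ 1) (h : l2 r ≤ c * (ε - l2 e)) :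
    l2 (Φ *ᵥ r + e) ≤ ε := by
  have hεe : 0 ≤ ε - l2 e := nonneg_of_mul_nonneg_right ((l2_nonneg r).trans h) hc
  calc l2 (Φ *ᵥ r + e) ≤ √(1 + δ) * l2 r + l2 e :=
        (l2_add_le _ _).trans (add_le_add_left (hΦ.l2_mulVec_le hr) _)
    _ ≤ √(1 + δ) * c * (ε - l2 e) + l2 e := by
        rw [mul_assoc]
        gcongr
    _ ≤ ε := by linarith [mul_le_of_le_one_left hεe hcδ]

lemma abs_mulVec_single_dotProduct_le (hΦ : RICq Φ N δ) {n : ℕ} (hn : n + 1 ≤ N)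
    {u : Fin d → ℝ} (hu : Sparse n u) {i : Fin d} (hui : u i = 0) :
    |Φ *ᵥ Pi.single i 1 ⬝ᵥ Φ *ᵥ u| ≤ δ * l2 u := by
  have h := hΦ.abs_dotProduct_mulVec_sub_le (u := Pi.single i 1) (S := insert i (support u))
    (Pi.support_single_subset.trans (Set.singleton_subset_iff.mpr (Set.mem_insert _ _)))
    (Set.subset_insert _ _) ((Set.ncard_insert_le _ _).trans ((Nat.add_le_add_right hu 1).trans hn))
  rwa [single_dotProduct, hui, mul_zero, sub_zero, l2_single_one, mul_one] at h

lemma abs_transpose_mulVec_apply_le (hΦ : RICq Φ N δ) (hδ : 0 ≤ δ) {s : ℕ} (hN : s + 1 ≤ N)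
    {x a : Fin d → ℝ} (hx : Sparse s x) (ha : Sparse s a) (e : Fin m → ℝ) (i : Fin d) :
    |(Φᵀ *ᵥ (Φ *ᵥ (x - a) + e)) i|
      ≤ (1 + δ) * linf (x - a) + 2 * δ * l2 (x - a) + √(1 + δ) * l2 e := by
  set r := x - a
  set c := Φ *ᵥ Pi.single i 1
  set r' := update r i 0
  set r₁ := (support x).indicator r'
  set r₂ := (support x)ᶜ.indicator r'
  have hr : r = r i • Pi.single i 1 + r₁ + r₂ := by
    rw [add_assoc, Set.indicator_self_add_compl]
    ext j
    by_cases hj : j = i <;> simp [r', hj]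
  have hl2 (T : Set (Fin d)) : l2 (T.indicator r') ≤ l2 r := l2_le_l2_of_abs_le fun j =>
    (norm_indicator_le_norm_self r' j).trans (by by_cases hj : j = i <;> simp [r', hj])
  have hr₁ : |c ⬝ᵥ Φ *ᵥ r₁| ≤ δ * l2 r :=
    (hΦ.abs_mulVec_single_dotProduct_le hN (.of_support_subset Set.support_indicator_subset hx)
      (by simp [r'])).trans (mul_le_mul_of_nonneg_left (hl2 _) hδ)
  have hr₂ : |c ⬝ᵥ Φ *ᵥ r₂| ≤ δ * l2 r := by
    refine (hΦ.abs_mulVec_single_dotProduct_le hN (.of_support_subset (fun j hj => ?_) ha)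
      (by simp [r₂, r'])).trans (mul_le_mul_of_nonneg_left (hl2 _) hδ)
    intro haj
    apply hj
    by_cases hxj : x j = 0 <;> by_cases hji : j = i <;> simp [r₂, r', r, hxj, hji, haj]
  have hc : c ⬝ᵥ c ≤ 1 + δ := by
    have h := (hΦ _ (.single (by omega) i 1)).2
    rwa [l2_single_one, one_pow, mul_one, l2_sq] at h
  have he : |c ⬝ᵥ e| ≤ √(1 + δ) * l2 e :=
    (abs_dotProduct_le_l2_mul_l2 c e).trans <| mul_le_mul_of_nonneg_right
      ((hΦ.l2_mulVec_le (.single (by omega) i 1)).trans_eq (by rw [l2_single_one, mul_one]))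
      (l2_nonneg e)
  have hri : |r i * (c ⬝ᵥ c)| ≤ (1 + δ) * linf r := by
    have hc₀ : 0 ≤ c ⬝ᵥ c := by
      rw [← l2_sq]
      positivity
    rw [abs_mul, abs_of_nonneg hc₀, mul_comm (1 + δ)]
    exact mul_le_mul (abs_le_linf r i) hc hc₀ (linf_nonneg r)
  have hcoord : (Φᵀ *ᵥ (Φ *ᵥ r + e)) i
      = r i * (c ⬝ᵥ c) + c ⬝ᵥ Φ *ᵥ r₁ + c ⬝ᵥ Φ *ᵥ r₂ + c ⬝ᵥ e := by
    have hcol (w : Fin m → ℝ) : (Φᵀ *ᵥ w) i = c ⬝ᵥ w := by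
      simp [c, mulVec_transpose, vecMul, dotProduct, mul_comm]
    rw [hcol]
    conv_lhs => rw [hr]
    simp only [mulVec_add, mulVec_smul, dotProduct_add, dotProduct_smul, smul_eq_mul]
    rfl
  rw [hcoord]
  calc _ ≤ |r i * (c ⬝ᵥ c) + c ⬝ᵥ Φ *ᵥ r₁ + c ⬝ᵥ Φ *ᵥ r₂| + |c ⬝ᵥ e| := abs_add_le _ _
    _ ≤ _ := by linarith [abs_add_three (r i * (c ⬝ᵥ c)) (c ⬝ᵥ Φ *ᵥ r₁) (c ⬝ᵥ Φ *ᵥ r₂)]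

lemma linf_transpose_mulVec_le (hΦ : RICq Φ N δ) (hδ : 0 ≤ δ) {s : ℕ} (hN : s + 1 ≤ N)
    {x a : Fin d → ℝ} (hx : Sparse s x) (ha : Sparse s a) (e : Fin m → ℝ) :
    linf (Φᵀ *ᵥ (Φ *ᵥ (x - a) + e))
      ≤ (1 + δ) * linf (x - a) + 2 * δ * l2 (x - a) + √(1 + δ) * l2 e :=
  linf_le (hΦ.abs_transpose_mulVec_apply_le hδ hN hx ha e) <|
    add_nonneg (add_nonneg (mul_nonneg (by linarith) (linf_nonneg _))
      (mul_nonneg (by positivity) (l2_nonneg _))) (mul_nonneg (Real.sqrt_nonneg _) (l2_nonneg _))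

end RICq

-- `(1.1 √2 + 0.4) s ρ + √2.2 √s E ≤ 2.2 (s ρ + 0.68 √s E) ≤ 0.99 η`, with `ρ = ‖r‖_∞`, `E = ‖e‖₂`.
lemma halting_threshold_arith {s ρ R E η : ℝ} (hs : 1 ≤ s) (hρ : 0 ≤ ρ) (hE : 0 ≤ E)
    (hR : R ≤ √(2 * s) * ρ) (h : ρ ≤ 0.45 * η / s - 0.68 * E / √s) :
    (1 + 1 / 10) * ρ + 2 * (1 / 10) * R + √(1 + 1 / 10) * E ≤ η / √(2 * s) := by
  rw [Real.sqrt_mul zero_le_two] at hR ⊢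
  have ht : √s ^ 2 = s := Real.sq_sqrt (by linarith)
  have ht₁ : 1 ≤ √s := Real.one_le_sqrt.mpr hs
  set t := √s
  set w := √2
  set q := √(1 + 1 / 10)
  have hw : w ^ 2 = 2 := Real.sq_sqrt zero_le_two
  have hw' : w ≤ 1.415 := (Real.sqrt_le_left (by norm_num)).mpr (by norm_num)
  have hqw : q * w ≤ 1.049 * 1.415 :=
    mul_le_mul ((Real.sqrt_le_left (by norm_num)).mpr (by norm_num)) hw' (by positivity)
      (by norm_num)
  have h' : ρ * t ^ 2 + 0.68 * E * t ≤ 0.45 * η := by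
    have e₁ : 0.45 * η / s * t ^ 2 = 0.45 * η := by
      rw [ht]
      field_simp
    have e₂ : 0.68 * E / t * t ^ 2 = 0.68 * E * t := by
      field_simp
    linarith [mul_le_mul_of_nonneg_right h (sq_nonneg t)]
  have hRw : R * (w * t) ≤ 2 * t ^ 2 * ρ :=
    calc R * (w * t) ≤ w * t * ρ * (w * t) := mul_le_mul_of_nonneg_right hR (by positivity)
      _ = 2 * t ^ 2 * ρ := by rw [← hw]; ring
  rw [le_div_iff₀ (by positivity)]
  have hρt : ρ * t ≤ ρ * t ^ 2 := by
    rw [sq, ← mul_assoc]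
    exact le_mul_of_one_le_right (by positivity) ht₁
  linarith [mul_le_mul_of_nonneg_right hw' (by positivity : 0 ≤ ρ * t),
    mul_le_mul_of_nonneg_right hqw (by positivity : 0 ≤ E * t),
    (by positivity : 0 ≤ ρ * t ^ 2), (by positivity : 0 ≤ E * t)]

/-- **Halting II.** Suppose `δ_{2s} ≤ 0.1`. For `s`-sparse `x, a`, with
`r = x − a`, `v = Φr + e` and `y = Φ*v`:
(i) if `‖x − a‖₂ ≤ 0.95 (ε − ‖e‖₂)` then `‖v‖₂ ≤ ε`;
(ii) if `‖x − a‖_∞ ≤ 0.45 η/s − 0.68 ‖e‖₂/√s` then `‖y‖_∞ ≤ η/√(2s)`. -/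
theorem stmt14 (m d s : ℕ) (hs : 0 < s)
    (Φ : Matrix (Fin m) (Fin d) ℝ) (hΦ : RICq Φ (2 * s) (1 / 10))
    (x a : Fin d → ℝ) (hx : Sparse s x) (ha : Sparse s a) (e : Fin m → ℝ)
    (ε η : ℝ) :
    (l2 (x - a) ≤ 0.95 * (ε - l2 e) → l2 (Φ.mulVec (x - a) + e) ≤ ε) ∧
    (linf (x - a) ≤ 0.45 * η / (s : ℝ) - 0.68 * l2 e / Real.sqrt (s : ℝ) →
      linf (Φ.transpose.mulVec (Φ.mulVec (x - a) + e)) ≤ η / Real.sqrt (2 * (s : ℝ))) := by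
  have hr : Sparse (2 * s) (x - a) := two_mul s ▸ hx.sub ha
  have hq : √(1 + 1 / 10) ≤ 1.05 := (Real.sqrt_le_left (by norm_num)).mpr (by norm_num)
  refine ⟨hΦ.l2_mulVec_add_le hr e (by norm_num) (by linarith), fun h => ?_⟩
  refine (hΦ.linf_transpose_mulVec_le (by norm_num) (by omega) hx ha e).trans ?_
  refine halting_threshold_arith (by exact_mod_cast hs) (linf_nonneg _) (l2_nonneg e) ?_ h
  simpa using hr.l2_le_sqrt_mul_linf
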